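/- The inclusion functor U : FPCM → Mon from the category of trace monoids with basic homomorphisms into the category of all monoids has a right adjoint R, which sends a monoid M to the trace monoid M(M \ {1}, I_M) where I_M = {(μ₁,μ₂) | μ₁ ≠ μ₂, μ₁,μ₂ ≠ 1, μ₁μ₂ = μ₂μ₁}, with counit ε_M : M(M \ {1}, I_M) → M defined on generators by ε_M(μ) = μ. -/

import Mathlib

open CategoryTheory

/-- The elementary commutation relation on words generated by an independence relation. -/
def traceRel (E : Type) (I : Set (E × E)) : FreeMonoid E → FreeMonoid E → Prop :=
  fun x y => ∃ a b : E, (a, b) ∈ I ∧ x = FreeMonoid.of a * FreeMonoid.of b ∧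
    y = FreeMonoid.of b * FreeMonoid.of a

/-- The congruence on the free monoid generated by commutation of independent pairs. -/
def traceCon (E : Type) (I : Set (E × E)) : Con (FreeMonoid E) := conGen (traceRel E I)

/-- The trace monoid `M(E,I)`. -/
abbrev TraceMonoid (E : Type) (I : Set (E × E)) : Type := (traceCon E I).Quotient

/-- The canonical projection from words to traces. -/
def trcMk {E : Type} {I : Set (E × E)} : FreeMonoid E →* TraceMonoid E I :=
  (traceCon E I).mk'

/-- The generator of the trace monoid corresponding to an event `e`. -/
def trc {E : Type} {I : Set (E × E)} (e : E) : TraceMonoid E I :=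
  trcMk (FreeMonoid.of e)

/-- `I` is an independence relation: irreflexive and symmetric. -/
structure IsIndep {E : Type} (I : Set (E × E)) : Prop where
  irrefl : ∀ a : E, (a, a) ∉ I
  symm : ∀ a b : E, (a, b) ∈ I → (b, a) ∈ I

/-- A homomorphism of trace monoids is basic if it sends generators to generators or to `1`. -/
def IsBasic {E E' : Type} {I : Set (E × E)} {I' : Set (E' × E')}
    (f : TraceMonoid E I →* TraceMonoid E' I') : Prop :=
  ∀ e : E, (∃ e' : E', f (trc e) = trc e') ∨ f (trc e) = 1

/-- A basic homomorphism preserves independence. -/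
def IsIndepPres {E E' : Type} {I : Set (E × E)} {I' : Set (E' × E')}
    (f : TraceMonoid E I →* TraceMonoid E' I') : Prop :=
  ∀ a b : E, (a, b) ∈ I → f (trc a) ≠ f (trc b) ∨ (f (trc a) = 1 ∧ f (trc b) = 1)

/-- The monoid homomorphism out of a trace monoid induced by a map on generators whose
images commute at independent pairs. -/
def liftHom {E : Type} {I : Set (E × E)} {N : Type*} [Monoid N] (φ : E → N)
    (hφ : ∀ a b : E, (a, b) ∈ I → φ a * φ b = φ b * φ a) : TraceMonoid E I →* N :=
  (traceCon E I).lift (FreeMonoid.lift φ) (by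
    refine Con.conGen_le.2 fun x y h => ?_
    obtain ⟨a, b, hab, rfl, rfl⟩ := h
    rw [Con.ker_rel]
    simp only [map_mul, FreeMonoid.lift_eval_of]
    exact hφ a b hab)

@[simp] theorem liftHom_trc {E : Type} {I : Set (E × E)} {N : Type*} [Monoid N] (φ : E → N)
    (hφ : ∀ a b : E, (a, b) ∈ I → φ a * φ b = φ b * φ a) (e : E) :
    liftHom φ hφ (trc (I := I) e) = φ e := by
  show (traceCon E I).lift _ _ ((traceCon E I).mk' (FreeMonoid.of e)) = φ e
  show FreeMonoid.lift φ (FreeMonoid.of e) = φ e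
  simp

theorem trc_comm {E : Type} {I : Set (E × E)} {a b : E} (h : (a, b) ∈ I) :
    (trc a : TraceMonoid E I) * trc b = trc b * trc a := by
  show trcMk (FreeMonoid.of a) * trcMk (FreeMonoid.of b) =
    trcMk (FreeMonoid.of b) * trcMk (FreeMonoid.of a)
  rw [← map_mul, ← map_mul]
  exact (Con.eq _).2 (ConGen.Rel.of _ _ ⟨a, b, h, rfl, rfl⟩)

theorem isBasic_id {E : Type} {I : Set (E × E)} :
    IsBasic (MonoidHom.id (TraceMonoid E I)) := fun e => Or.inl ⟨e, rfl⟩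

theorem isBasic_comp {E₁ E₂ E₃ : Type} {I₁ : Set (E₁ × E₁)} {I₂ : Set (E₂ × E₂)}
    {I₃ : Set (E₃ × E₃)} {f : TraceMonoid E₁ I₁ →* TraceMonoid E₂ I₂}
    {g : TraceMonoid E₂ I₂ →* TraceMonoid E₃ I₃} (hf : IsBasic f) (hg : IsBasic g) :
    IsBasic (g.comp f) := by
  intro e
  rcases hf e with ⟨e', he⟩ | he
  · rcases hg e' with ⟨e'', he''⟩ | he''
    · exact Or.inl ⟨e'', by simp [MonoidHom.comp_apply, he, he'']⟩
    · exact Or.inr (by simp [MonoidHom.comp_apply, he, he''])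
  · exact Or.inr (by simp [MonoidHom.comp_apply, he])
/-- An object of the category `FPCM`: a set of events with an independence relation. -/
structure FPCMObj where
  E : Type
  I : Set (E × E)
  indep : IsIndep I

/-- The category `FPCM` of trace monoids and basic homomorphisms. -/
instance : Category FPCMObj where
  Hom X Y := {f : TraceMonoid X.E X.I →* TraceMonoid Y.E Y.I // IsBasic f}
  id _ := ⟨MonoidHom.id _, isBasic_id⟩
  comp f g := ⟨g.1.comp f.1, isBasic_comp f.2 g.2⟩
  id_comp _ := Subtype.ext (MonoidHom.comp_id _)
  comp_id _ := Subtype.ext (MonoidHom.id_comp _)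
  assoc _ _ _ := Subtype.ext rfl

/-- The inclusion functor from `FPCM` into the category of monoids. -/
def UFPCM : FPCMObj ⥤ MonCat.{0} where
  obj X := MonCat.of (TraceMonoid X.E X.I)
  map f := MonCat.ofHom f.1
  map_id _ := rfl
  map_comp _ _ := rfl

/-- The independence relation on the non-identity elements of a monoid given by distinct
commuting pairs. -/
def IMon (M : Type) [Monoid M] : Set ({m : M // m ≠ 1} × {m : M // m ≠ 1}) :=
  {p | p.1 ≠ p.2 ∧ (p.1 : M) * (p.2 : M) = (p.2 : M) * (p.1 : M)}

/-- The trace monoid `M(M \ {1}, I_M)` associated to a monoid `M`. -/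
def RFPCMObj (M : MonCat.{0}) : FPCMObj where
  E := {m : M // m ≠ 1}
  I := IMon M
  indep := ⟨fun _ h => h.1 rfl, fun _ _ h => ⟨fun e => h.1 e.symm, h.2.symm⟩⟩

/-- The counit homomorphism `ε_M : M(M \ {1}, I_M) → M`, defined on generators by
`ε_M(μ) = μ`. -/
def epsFPCM (M : MonCat.{0}) :
    TraceMonoid (RFPCMObj M).E (RFPCMObj M).I →* M :=
  liftHom (fun m : {m : M // m ≠ 1} => m.val) (fun _ _ h => h.2)

/-! A homomorphism `f : M(E,I) → M` factors through `ε_M` by the basic homomorphism `f̄`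
sending a generator `e` to the generator `f e` of `M(M \ {1}, I_M)`, or to `1` when `f e = 1`:
independent generators have commuting images, which are then equal or independent in `I_M`,
so `f̄` is well defined. It is the only basic factorisation, since a basic `g` is recovered from
`ε_M ∘ g` on generators; and `f̄ ∘ h` is the lift of `f ∘ h` for basic `h`. This natural
bijection of hom-sets determines `R` on morphisms and the adjunction `U ⊣ R`. -/

theorem TraceMonoid.hom_ext {E : Type} {I : Set (E × E)} {N : Type*} [Monoid N]
    {f g : TraceMonoid E I →* N} (h : ∀ e, f (trc e) = g (trc e)) : f = g :=
  Con.hom_ext (FreeMonoid.hom_eq h)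

section BasicLift

variable {M : MonCat.{0}}

open Classical in
noncomputable def traceOf (m : M) : TraceMonoid (RFPCMObj M).E (RFPCMObj M).I :=
  if h : m = 1 then 1 else trc (⟨m, h⟩ : (RFPCMObj M).E)

@[simp] theorem traceOf_one : traceOf (1 : M) = 1 := dif_pos rfl

theorem traceOf_of_ne_one {m : M} (h : m ≠ 1) :
    traceOf m = trc (⟨m, h⟩ : (RFPCMObj M).E) := dif_neg h

theorem traceOf_mul_comm {m n : M} (h : m * n = n * m) :
    traceOf m * traceOf n = traceOf n * traceOf m := by
  by_cases hm : m = 1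
  · simp [hm]
  by_cases hn : n = 1
  · simp [hn]
  rw [traceOf_of_ne_one hm, traceOf_of_ne_one hn]
  by_cases hmn : m = n
  · subst hmn; rfl
  · exact trc_comm ⟨fun h' => hmn (congrArg Subtype.val h'), h⟩

theorem epsFPCM_trc (μ : (RFPCMObj M).E) : epsFPCM M (trc μ) = μ.val :=
  liftHom_trc _ _ _

@[simp] theorem epsFPCM_traceOf (m : M) : epsFPCM M (traceOf m) = m := by
  by_cases hm : m = 1
  · simp [hm]
  · rw [traceOf_of_ne_one hm]
    exact epsFPCM_trc _

variable {E : Type} {I : Set (E × E)}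

/-- The homomorphism `f̄` of the universal property. -/
noncomputable def basicLift (f : TraceMonoid E I →* M) :
    TraceMonoid E I →* TraceMonoid (RFPCMObj M).E (RFPCMObj M).I :=
  liftHom (fun e => traceOf (f (trc e))) fun a b hab =>
    traceOf_mul_comm (by rw [← map_mul, ← map_mul, trc_comm hab])

@[simp] theorem basicLift_trc (f : TraceMonoid E I →* M) (e : E) :
    basicLift f (trc e) = traceOf (f (trc e)) :=
  liftHom_trc _ _ _

theorem isBasic_basicLift (f : TraceMonoid E I →* M) : IsBasic (basicLift f) := by
  intro e
  rw [basicLift_trc]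
  by_cases hf : f (trc e) = 1
  · exact Or.inr (by rw [hf, traceOf_one])
  · exact Or.inl ⟨_, traceOf_of_ne_one hf⟩

theorem epsFPCM_comp_basicLift (f : TraceMonoid E I →* M) :
    (epsFPCM M).comp (basicLift f) = f :=
  TraceMonoid.hom_ext fun e => by simp

theorem basicLift_comp_of_isBasic {E' : Type} {I' : Set (E' × E')}
    {h : TraceMonoid E' I' →* TraceMonoid E I} (hh : IsBasic h) (f : TraceMonoid E I →* M) :
    basicLift (f.comp h) = (basicLift f).comp h :=
  TraceMonoid.hom_ext fun e => by
    rcases hh e with ⟨e', he⟩ | he <;> simp [he]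

theorem basicLift_epsFPCM : basicLift (epsFPCM M) = MonoidHom.id _ :=
  TraceMonoid.hom_ext fun μ => by
    rw [basicLift_trc, epsFPCM_trc, traceOf_of_ne_one μ.2]
    rfl

end BasicLift

noncomputable def fpcmHomEquiv (X : FPCMObj) (M : MonCat.{0}) :
    (UFPCM.obj X ⟶ M) ≃ (X ⟶ RFPCMObj M) where
  toFun f := ⟨basicLift f.hom, isBasic_basicLift f.hom⟩
  invFun g := MonCat.ofHom ((epsFPCM M).comp g.1)
  left_inv f := MonCat.hom_ext (epsFPCM_comp_basicLift f.hom)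
  right_inv g := Subtype.ext <| by
    change basicLift ((epsFPCM M).comp g.1) = g.1
    rw [basicLift_comp_of_isBasic g.2, basicLift_epsFPCM, MonoidHom.id_comp]

theorem fpcmHomEquiv_naturality {X' X : FPCMObj} {M : MonCat.{0}} (f : X' ⟶ X)
    (g : UFPCM.obj X ⟶ M) :
    fpcmHomEquiv X' M (UFPCM.map f ≫ g) = f ≫ fpcmHomEquiv X M g :=
  Subtype.ext (basicLift_comp_of_isBasic f.2 g.hom)

/-- The inclusion functor `U : FPCM → Mon` has a right adjoint `R`, sending a monoid `M` to
the trace monoid `M(M \ {1}, I_M)`, and the counit is given on generators by `ε_M(μ) = μ`. -/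
theorem fpcm_inclusion_has_right_adjoint :
    ∃ (R : MonCat.{0} ⥤ FPCMObj) (hobj : ∀ M : MonCat.{0}, R.obj M = RFPCMObj M)
      (adj : UFPCM ⊣ R), ∀ M : MonCat.{0},
        adj.counit.app M =
          CategoryTheory.eqToHom (congrArg UFPCM.obj (hobj M)) ≫ MonCat.ofHom (epsFPCM M) := by
  refine ⟨Adjunction.rightAdjointOfEquiv fpcmHomEquiv fun _ _ _ => fpcmHomEquiv_naturality,
    fun _ => rfl, Adjunction.adjunctionOfEquivRight _ _, fun M => ?_⟩
  -- the counit is the inverse bijection applied to `𝟙`, i.e. `ε_M ∘ id`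
  exact MonCat.hom_ext (MonoidHom.comp_id _)
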